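/- arXiv:2303.01364 — 9 statements merged into one kernel-verified Lean document; each statement's English description precedes it below -/
import Mathlib

section
/- For every p > 0 with p ∉ {1} and every z > 0, F_p(z) ≥ (1/(2 max{p, 1-p})) F_{1/2}(z), where F_{1/2}(z) = 2(√z - 1)^2 (via F_p(z) = (z^p - pz + p - 1)/(p(p-1)) for p ≠ 0,1). -/
theorem Fp_ge_half_entropy (p z : ℝ) (hp0 : 0 < p) (hp1 : p ≠ 1) (hz : 0 < z) :
    (z ^ p - p * z + p - 1) / (p * (p - 1)) ≥
      (1 / (2 * max p (1 - p))) * (2 * (Real.sqrt z - 1) ^ 2) := by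
  set s := Real.sqrt z with hs_def
  have hs : 0 < s := Real.sqrt_pos.mpr hz
  have hs2 : s ^ 2 = z := Real.sq_sqrt hz.le
  have hzp : z ^ p = s ^ (2 * p) := by
    rw [Real.rpow_mul hs.le, Real.rpow_two, hs2]
  have hone : (1 : ℝ) + (s - 1) = s := by ring
  rcases lt_or_ge 1 p with hp | hp
  · -- case p > 1, max = p
    have hmax : max p (1 - p) = p := max_eq_left (by linarith)
    rw [hmax, ge_iff_le]
    have hB : 1 + (2 * p - 1) * (s - 1) ≤ s ^ (2 * p - 1) := by
      have := one_add_mul_self_le_rpow_one_add (s := s - 1) (by linarith) (p := 2 * p - 1)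
        (by linarith)
      rwa [hone] at this
    have hsplit : s ^ (2 * p) = s * s ^ (2 * p - 1) := by
      conv_lhs => rw [show (2 * p) = 1 + (2 * p - 1) by ring, Real.rpow_add hs, Real.rpow_one]
    have hBmul : s * (1 + (2 * p - 1) * (s - 1)) ≤ s * s ^ (2 * p - 1) :=
      mul_le_mul_of_nonneg_left hB hs.le
    have hA : (p - 1) * (s - 1) ^ 2 ≤ z ^ p - p * z + p - 1 := by
      rw [hzp, hsplit, ← hs2]; nlinarith [hBmul]
    have hden : 0 < p * (p - 1) := mul_pos hp0 (by linarith)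
    rw [le_div_iff₀ hden]
    have : 1 / (2 * p) * (2 * (s - 1) ^ 2) * (p * (p - 1)) = (p - 1) * (s - 1) ^ 2 := by
      field_simp
    rw [this]; exact hA
  · have hp' : p < 1 := lt_of_le_of_ne hp hp1
    have hden : p * (p - 1) < 0 := mul_neg_of_pos_of_neg hp0 (by linarith)
    rcases le_or_gt (1 / 2 : ℝ) p with hhalf | hhalf
    · -- case 1/2 ≤ p < 1, max = p
      have hmax : max p (1 - p) = p := max_eq_left (by linarith)
      rw [hmax, ge_iff_le, le_div_iff_of_neg hden]
      have hB : s ^ (2 * p - 1) ≤ 1 + (2 * p - 1) * (s - 1) := by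
        have := rpow_one_add_le_one_add_mul_self (s := s - 1) (by linarith) (p := 2 * p - 1)
          (by linarith) (by linarith)
        rwa [hone] at this
      have hsplit : s ^ (2 * p) = s * s ^ (2 * p - 1) := by
        conv_lhs => rw [show (2 * p) = 1 + (2 * p - 1) by ring, Real.rpow_add hs, Real.rpow_one]
      have hBmul : s * s ^ (2 * p - 1) ≤ s * (1 + (2 * p - 1) * (s - 1)) :=
        mul_le_mul_of_nonneg_left hB hs.le
      have hA : z ^ p - p * z + p - 1 ≤ (p - 1) * (s - 1) ^ 2 := by
        rw [hzp, hsplit, ← hs2]; nlinarith [hBmul]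
      have : 1 / (2 * p) * (2 * (s - 1) ^ 2) * (p * (p - 1)) = (p - 1) * (s - 1) ^ 2 := by
        field_simp
      rw [this]; exact hA
    · -- case 0 < p < 1/2, max = 1 - p
      have hmax : max p (1 - p) = 1 - p := max_eq_right (by linarith)
      rw [hmax, ge_iff_le, le_div_iff_of_neg hden]
      have hB : s ^ (2 * p) ≤ 1 + (2 * p) * (s - 1) := by
        have := rpow_one_add_le_one_add_mul_self (s := s - 1) (by linarith) (p := 2 * p)
          (by linarith) (by linarith)
        rwa [hone] at this
      have hA : z ^ p - p * z + p - 1 ≤ -p * (s - 1) ^ 2 := by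
        rw [hzp, ← hs2]; nlinarith [hB]
      have : 1 / (2 * (1 - p)) * (2 * (s - 1) ^ 2) * (p * (p - 1)) = -p * (s - 1) ^ 2 := by
        have h1p : (1 : ℝ) - p ≠ 0 := by linarith
        field_simp; ring
      rw [this]; exact hA
end

section
/- For α ≥ 1 and z ∈ (-1, 0], the function Φ_α(z) := ((z+1)^α - 1) log((z+1)^α) satisfies Φ_α(z) ≥ α z². -/
theorem Phi_alpha_lower_neg (α z : ℝ) (hα : 1 ≤ α) (hz1 : -1 < z) (hz0 : z ≤ 0) :
    ((z + 1) ^ α - 1) * Real.log ((z + 1) ^ α) ≥ α * z ^ 2 := by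
  have hx : (0:ℝ) < z + 1 := by linarith
  have hx1 : z + 1 ≤ 1 := by linarith
  rw [Real.log_rpow hx]
  have hpow : (z + 1) ^ α ≤ z + 1 := by
    calc (z + 1) ^ α ≤ (z + 1) ^ (1:ℝ) :=
          Real.rpow_le_rpow_of_exponent_ge hx hx1 hα
      _ = z + 1 := Real.rpow_one _
  have hlog : Real.log (z + 1) ≤ z := by
    have := Real.log_le_sub_one_of_pos hx
    linarith
  have hlog0 : Real.log (z + 1) ≤ 0 := Real.log_nonpos (by linarith) hx1
  have key : ((z + 1) ^ α - 1) * Real.log (z + 1) ≥ z ^ 2 := by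
    nlinarith [mul_nonneg (by linarith : (0:ℝ) ≤ 1 - (z+1)^α) (by linarith : (0:ℝ) ≤ -Real.log (z+1))]
  calc ((z + 1) ^ α - 1) * (α * Real.log (z + 1))
      = α * (((z + 1) ^ α - 1) * Real.log (z + 1)) := by ring
    _ ≥ α * z ^ 2 := by
        have h0 : (0:ℝ) ≤ z ^ 2 := sq_nonneg z
        nlinarith
end

section
/- For α ≥ 1 and z ≥ 0, the function Φ_α(z) := ((z+1)^α - 1) log((z+1)^α) satisfies Φ_α(z) ≥ (α/2) · max{α z, z^α} · min{z, 1}. -/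
theorem Phi_alpha_lower_pos (α z : ℝ) (hα : 1 ≤ α) (hz : 0 ≤ z) :
    ((z + 1) ^ α - 1) * Real.log ((z + 1) ^ α) ≥
      (α / 2) * max (α * z) (z ^ α) * min z 1 := by
  have hz1 : (0:ℝ) < z + 1 := by linarith
  rw [Real.log_rpow hz1]
  have hA1 : α * z ≤ (z + 1) ^ α - 1 := by
    have h := one_add_mul_self_le_rpow_one_add (by linarith : (-1:ℝ) ≤ z) hα
    have : (1 + z) ^ α = (z + 1) ^ α := by ring_nf
    linarith [h, this ▸ h]
  have hA2 : z ^ α ≤ (z + 1) ^ α - 1 := by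
    have h := NNReal.add_rpow_le_rpow_add (Real.toNNReal z) 1 hα
    have h' : ((Real.toNNReal z ^ α + 1 ^ α : NNReal) : ℝ) ≤ (((Real.toNNReal z + 1) ^ α : NNReal) : ℝ) := by
      exact_mod_cast h
    push_cast at h'
    rw [Real.coe_toNNReal z hz] at h'
    simp [Real.one_rpow] at h'
    linarith
  have hM : max (α * z) (z ^ α) ≤ (z + 1) ^ α - 1 := max_le hA1 hA2
  have hL : min z 1 / 2 ≤ Real.log (z + 1) := by
    rcases le_total z 1 with h | h
    · rw [min_eq_left h]
      have hlog := Real.one_sub_inv_le_log_of_pos hz1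
      have e : 1 - (z + 1)⁻¹ = z / (z + 1) := by field_simp; ring
      have : z / 2 ≤ z / (z + 1) := by
        rw [div_le_div_iff₀ (by norm_num) hz1]
        nlinarith
      linarith
    · rw [min_eq_right h]
      have h2 : Real.log 2 ≤ Real.log (z + 1) :=
        Real.log_le_log (by norm_num) (by linarith)
      have := Real.log_two_gt_d9
      linarith
  have hMnn : 0 ≤ max (α * z) (z ^ α) :=
    le_max_of_le_left (by positivity)
  have hLnn : 0 ≤ Real.log (z + 1) := Real.log_nonneg (by linarith)
  have hAnn : 0 ≤ (z + 1) ^ α - 1 := le_trans hMnn hM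
  have hmnn : 0 ≤ min z 1 := le_min hz (by norm_num)
  calc (α / 2) * max (α * z) (z ^ α) * min z 1
      = α * (max (α * z) (z ^ α) * (min z 1 / 2)) := by ring
    _ ≤ α * (((z + 1) ^ α - 1) * Real.log (z + 1)) := by
        apply mul_le_mul_of_nonneg_left _ (by linarith)
        exact mul_le_mul hM hL (by linarith) hAnn
    _ = ((z + 1) ^ α - 1) * (α * Real.log (z + 1)) := by ring
end

section
/- The Legendre transform of Φ_1, where Φ_1(z) = z log(z+1) for z > -1 and Φ_1(z) = +∞ for z ≤ -1, satisfies Φ_1*(ξ) := sup_z (ξz - Φ_1(z)) ≤ e^ξ - ξ - 1 for all ξ ∈ ℝ. -/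
theorem Phi_one_star_le (ξ : ℝ) :
    ∀ z : ℝ, -1 < z →
      ξ * z - z * Real.log (z + 1) ≤ Real.exp ξ - ξ - 1 := by
  intro z hz
  have hz1 : 0 < z + 1 := by linarith
  have hlog : Real.log (z + 1) ≤ z := by
    have := Real.log_le_sub_one_of_pos hz1; linarith
  have h1 : (ξ - Real.log (z + 1)) + 1 ≤ Real.exp ξ / (z + 1) := by
    have := Real.add_one_le_exp (ξ - Real.log (z + 1))
    rwa [Real.exp_sub, Real.exp_log hz1] at this
  have h2 : ((ξ - Real.log (z + 1)) + 1) * (z + 1) ≤ Real.exp ξ := by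
    have := mul_le_mul_of_nonneg_right h1 hz1.le
    rwa [div_mul_cancel₀ _ hz1.ne'] at this
  nlinarith
end

section
/- For α ≥ 2, the Legendre transform of Φ_α, where Φ_α(z) = ((z+1)^α - 1)·α log(z+1) for z > -1 and +∞ otherwise, satisfies Φ_α*(ξ) ≤ c̃_α |ξ|^{α/(α-1)} for all ξ ∈ ℝ, where c̃_α = (2/α²)^{1/(α-1)} · (α-1)/α. -/
open Real

private lemma phi_lower_aux {α z : ℝ} (hα : 2 ≤ α) (hz : -1 < z) :
    (α / 2) * |z| ^ α ≤ ((z + 1) ^ α - 1) * (α * Real.log (z + 1)) := by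
  have hα0 : (0 : ℝ) < α := by linarith
  have hw : (0 : ℝ) < z + 1 := by linarith
  rcases lt_trichotomy z 0 with h0 | rfl | h0
  · -- -1 < z < 0
    have hw1 : z + 1 ≤ 1 := by linarith
    have h1 : (z + 1) ^ α ≤ z + 1 := by
      have := Real.rpow_le_rpow_of_exponent_ge hw hw1 (show (1:ℝ) ≤ α by linarith)
      rwa [Real.rpow_one] at this
    have h2 : Real.log (z + 1) ≤ z := by
      have := Real.log_le_sub_one_of_pos hw
      linarith
    have ht : |z| = -z := abs_of_neg h0
    have htpos : 0 < -z := by linarith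
    have htle : -z ≤ 1 := by linarith
    have hpow : |z| ^ α ≤ |z| ^ (2 : ℝ) :=
      Real.rpow_le_rpow_of_exponent_ge (by rw [ht]; exact htpos) (by rw [ht]; exact htle) hα
    have h2r : |z| ^ (2 : ℝ) = z * z := by
      rw [show (2:ℝ) = ((2:ℕ):ℝ) by norm_num, Real.rpow_natCast]
      rw [ht]; ring
    -- Φ ≥ α z²
    have hA : -z ≤ 1 - (z + 1) ^ α := by linarith
    have hL : -z ≤ -Real.log (z + 1) := by linarith
    have hΦ : α * (z * z) ≤ ((z + 1) ^ α - 1) * (α * Real.log (z + 1)) := by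
      have := mul_le_mul hA hL (by linarith) (by linarith)
      nlinarith
    nlinarith [hpow, h2r, hΦ, sq_nonneg z]
  · simp [Real.zero_rpow hα0.ne', Real.one_rpow]
  · -- z > 0
    have hw1 : (1:ℝ) ≤ z + 1 := by linarith
    have hone : (1:ℝ) ≤ (z + 1) ^ (α - 1) := Real.one_le_rpow hw1 (by linarith)
    have hsplit : (z + 1) ^ α = (z + 1) ^ (α - 1) * (z + 1) := by
      have := Real.rpow_add_one hw.ne' (α - 1)
      rwa [sub_add_cancel] at this
    have hA : z * (z + 1) ^ (α - 1) ≤ (z + 1) ^ α - 1 := by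
      rw [hsplit]; nlinarith
    have hL : z / (z + 1) ≤ Real.log (z + 1) := by
      have h := Real.add_one_le_exp (-Real.log (z + 1))
      rw [Real.exp_neg, Real.exp_log hw] at h
      rw [div_le_iff₀ hw]
      have hinv : 0 < (z+1)⁻¹ := inv_pos.2 hw
      have : (-Real.log (z+1) + 1) * (z+1) ≤ (z+1)⁻¹ * (z+1) :=
        mul_le_mul_of_nonneg_right h hw.le
      rw [inv_mul_cancel₀ hw.ne'] at this
      nlinarith
    have hApos : 0 ≤ z * (z + 1) ^ (α - 1) := by positivity
    have hLpos : 0 ≤ z / (z + 1) := by positivity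
    have hΦ : (z * (z + 1) ^ (α - 1)) * (α * (z / (z + 1))) ≤
        ((z + 1) ^ α - 1) * (α * Real.log (z + 1)) := by
      apply mul_le_mul hA (by nlinarith) (by positivity) (by nlinarith)
    -- rewrite LHS as α z² (z+1)^(α-2)
    have hsplit2 : (z + 1) ^ (α - 1) = (z + 1) ^ (α - 2) * (z + 1) := by
      have := Real.rpow_add_one hw.ne' (α - 2)
      rw [show α - 2 + 1 = α - 1 by ring] at this
      exact this
    have heq : (z * (z + 1) ^ (α - 1)) * (α * (z / (z + 1))) =
        α * (z * z) * (z + 1) ^ (α - 2) := by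
      rw [hsplit2]; field_simp
    have hz2 : z ^ α = z ^ (α - 2) * (z * z) := by
      have h1 := Real.rpow_add h0 (α - 2) 1
      have h2 := Real.rpow_add h0 (α - 1) 1
      rw [show α - 2 + 1 = α - 1 by ring, Real.rpow_one] at h1
      rw [show α - 1 + 1 = α by ring, Real.rpow_one] at h2
      rw [h2, h1]; ring
    have hcmp : z ^ (α - 2) ≤ (z + 1) ^ (α - 2) :=
      Real.rpow_le_rpow h0.le (by linarith) (by linarith)
    have habs : |z| = z := abs_of_pos h0
    rw [habs]
    calc (α / 2) * z ^ α ≤ α * z ^ α := by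
          have : 0 ≤ z ^ α := Real.rpow_nonneg h0.le α
          nlinarith
      _ = α * (z * z) * z ^ (α - 2) := by rw [hz2]; ring
      _ ≤ α * (z * z) * (z + 1) ^ (α - 2) := by
          apply mul_le_mul_of_nonneg_left hcmp; positivity
      _ = (z * (z + 1) ^ (α - 1)) * (α * (z / (z + 1))) := heq.symm
      _ ≤ _ := hΦ

theorem Phi_alpha_star_le_ge_two (α ξ : ℝ) (hα : 2 ≤ α) :
    ∀ z : ℝ, -1 < z →
      ξ * z - ((z + 1) ^ α - 1) * (α * Real.log (z + 1)) ≤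
        ((2 / α ^ 2) ^ (1 / (α - 1)) * ((α - 1) / α)) * |ξ| ^ (α / (α - 1)) := by
  intro z hz
  have hα0 : (0 : ℝ) < α := by linarith
  have hα1 : (0 : ℝ) < α - 1 := by linarith
  have hK : (0 : ℝ) < α ^ 2 / 2 := by positivity
  set c : ℝ := (α ^ 2 / 2) ^ (α⁻¹) with hc
  have hcpos : 0 < c := Real.rpow_pos_of_pos hK _
  have hconj : α.HolderConjugate (α / (α - 1)) := Real.holderConjugate_iff.mpr ⟨by linarith, by field_simp; ring⟩
  have hyoung := Real.young_inequality_of_nonneg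
    (mul_nonneg hcpos.le (abs_nonneg z)) (div_nonneg (abs_nonneg ξ) hcpos.le) hconj
  have hab : (c * |z|) * (|ξ| / c) = |ξ| * |z| := by field_simp
  have hca : c ^ α = α ^ 2 / 2 := by
    rw [hc, ← Real.rpow_mul hK.le, inv_mul_cancel₀ hα0.ne', Real.rpow_one]
  have haα : (c * |z|) ^ α = (α ^ 2 / 2) * |z| ^ α := by
    rw [Real.mul_rpow hcpos.le (abs_nonneg z), hca]
  have hcq : c ^ (α / (α - 1)) = (α ^ 2 / 2) ^ (1 / (α - 1)) := by
    rw [hc, ← Real.rpow_mul hK.le]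
    congr 1
    field_simp
  have hbq : (|ξ| / c) ^ (α / (α - 1)) =
      |ξ| ^ (α / (α - 1)) * (2 / α ^ 2) ^ (1 / (α - 1)) := by
    rw [Real.div_rpow (abs_nonneg ξ) hcpos.le, hcq,
      show (2 / α ^ 2 : ℝ) = (α ^ 2 / 2)⁻¹ by field_simp,
      Real.inv_rpow hK.le, div_eq_mul_inv]
  have hΦ := phi_lower_aux hα hz
  have hξz : ξ * z ≤ |ξ| * |z| := by
    calc ξ * z ≤ |ξ * z| := le_abs_self _
      _ = |ξ| * |z| := abs_mul _ _
  rw [hab, haα, hbq] at hyoung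
  have hqpos : 0 < α / (α - 1) := by positivity
  have key : |ξ| * |z| - (α / 2) * |z| ^ α ≤
      ((2 / α ^ 2) ^ (1 / (α - 1)) * ((α - 1) / α)) * |ξ| ^ (α / (α - 1)) := by
    have h1 : (α ^ 2 / 2) * |z| ^ α / α = (α / 2) * |z| ^ α := by
      field_simp
    have h2 : |ξ| ^ (α / (α - 1)) * (2 / α ^ 2) ^ (1 / (α - 1)) / (α / (α - 1)) =
        ((2 / α ^ 2) ^ (1 / (α - 1)) * ((α - 1) / α)) * |ξ| ^ (α / (α - 1)) := by
      field_simp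
    rw [h1, h2] at hyoung
    linarith
  linarith
end

section
/- For α ∈ (1, 2], the Legendre transform of Φ_α satisfies Φ_α*(ξ) ≤ max{ c̃_α |ξ|^{α/(α-1)}, ξ²/(2α) } for all ξ ∈ ℝ, where c̃_α = (2/α²)^{1/(α-1)} (α-1)/α. -/
open Real

lemma aux_one_add_rpow {z α : ℝ} (hz : 0 ≤ z) (hα : 1 ≤ α) :
    1 + z ^ α ≤ (1 + z) ^ α := by
  have h := NNReal.add_rpow_le_rpow_add (p := α) 1 z.toNNReal hα
  rw [← NNReal.coe_le_coe] at h
  push_cast [NNReal.coe_rpow, Real.coe_toNNReal z hz] at h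
  simpa using h

-- Young step: for z ≥ 0, ξ any: ξ*z ≤ c̃ |ξ|^p + (α/2) z^α
lemma aux_young (α ξ z : ℝ) (hα1 : 1 < α) (hz : 0 ≤ z) :
    ξ * z ≤ ((2 / α ^ 2) ^ (1 / (α - 1)) * ((α - 1) / α)) * |ξ| ^ (α / (α - 1))
      + (α / 2) * z ^ α := by
  have hαpos : (0:ℝ) < α := by linarith
  have ha1 : (0:ℝ) < α - 1 := by linarith
  have hc : (0:ℝ) < 2 / α ^ 2 := by positivity
  set lam : ℝ := (2 / α ^ 2) ^ (α⁻¹) with hlam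
  have hlampos : 0 < lam := Real.rpow_pos_of_pos hc _
  have hconj : Real.HolderConjugate (α / (α - 1)) α := by
    refine ⟨?_, div_pos hαpos ha1, hαpos⟩
    field_simp
    ring
  have hy := Real.young_inequality_of_nonneg
    (mul_nonneg hlampos.le (abs_nonneg ξ)) (div_nonneg hz hlampos.le) hconj
  have hlam_p : lam ^ (α / (α - 1)) = (2 / α ^ 2) ^ (1 / (α - 1)) := by
    rw [hlam, ← Real.rpow_mul hc.le]
    congr 1
    field_simp
  have hlam_a : lam ^ α = 2 / α ^ 2 := by
    rw [hlam, ← Real.rpow_mul hc.le, inv_mul_cancel₀ hαpos.ne', Real.rpow_one]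
  have e1 : (lam * |ξ|) ^ (α / (α - 1)) = (2 / α ^ 2) ^ (1 / (α - 1)) * |ξ| ^ (α / (α - 1)) := by
    rw [Real.mul_rpow hlampos.le (abs_nonneg ξ), hlam_p]
  have e2 : (z / lam) ^ α = z ^ α / (2 / α ^ 2) := by
    rw [Real.div_rpow hz hlampos.le, hlam_a]
  have hls : lam * |ξ| * (z / lam) = |ξ| * z := by
    field_simp
  rw [hls, e1, e2] at hy
  have hxz : ξ * z ≤ |ξ| * z := mul_le_mul_of_nonneg_right (le_abs_self ξ) hz
  have h2 : z ^ α / (2 / α ^ 2) / α = (α / 2) * z ^ α := by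
    field_simp
  have h3 : (2 / α ^ 2) ^ (1 / (α - 1)) * |ξ| ^ (α / (α - 1)) / (α / (α - 1))
      = ((2 / α ^ 2) ^ (1 / (α - 1)) * ((α - 1) / α)) * |ξ| ^ (α / (α - 1)) := by
    field_simp
  rw [h2, h3] at hy
  linarith

theorem Phi_alpha_star_le_one_two (α ξ : ℝ) (hα1 : 1 < α) (hα2 : α ≤ 2) :
    ∀ z : ℝ, -1 < z →
      ξ * z - ((z + 1) ^ α - 1) * (α * Real.log (z + 1)) ≤
        max (((2 / α ^ 2) ^ (1 / (α - 1)) * ((α - 1) / α)) * |ξ| ^ (α / (α - 1)))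
          (ξ ^ 2 / (2 * α)) := by
  intro z hz
  have hαpos : (0:ℝ) < α := by linarith
  have ht : (0:ℝ) < z + 1 := by linarith
  set L := Real.log (z + 1) with hL
  rcases le_or_gt z 1 with hz1 | hz1
  · -- z ≤ 1 : quadratic bound
    have hΦ : α * z ^ 2 / 2 ≤ ((z + 1) ^ α - 1) * (α * L) := by
      rcases le_or_gt z 0 with hz0 | hz0
      · -- -1 < z ≤ 0
        have h1 : (z + 1) ^ α ≤ z + 1 := by
          have := Real.rpow_le_rpow_of_exponent_ge ht (by linarith) hα1.le
          rwa [Real.rpow_one] at this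
        have h2 : L ≤ z := by
          have := Real.log_le_sub_one_of_pos ht
          linarith
        have hLle : L ≤ 0 := by
          rw [hL]
          exact Real.log_nonpos (by linarith) (by linarith)
        have hA : -z ≤ 1 - (z + 1) ^ α := by linarith
        have hB : -z ≤ -L := by linarith
        have key : (-z) * (-z) ≤ (1 - (z + 1) ^ α) * (-L) :=
          mul_le_mul hA hB (by linarith) (by linarith)
        nlinarith [key, sq_nonneg z]
      · -- 0 < z ≤ 1
        have h1 : 1 + α * z ≤ (z + 1) ^ α := by
          have := one_add_mul_self_le_rpow_one_add (by linarith : (-1:ℝ) ≤ z) hα1.le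
          rwa [add_comm (1:ℝ) z] at this
        have h2 : z ≤ L * (z + 1) := by
          have hinv : Real.log (z + 1)⁻¹ ≤ (z + 1)⁻¹ - 1 :=
            Real.log_le_sub_one_of_pos (by positivity)
          rw [Real.log_inv] at hinv
          have hmul : (z + 1) * (z + 1)⁻¹ = 1 := mul_inv_cancel₀ ht.ne'
          nlinarith [hinv, ht]
        have hLpos : 0 ≤ L := Real.log_nonneg (by linarith)
        have hA : α * z ≤ (z + 1) ^ α - 1 := by linarith
        have hαL : 0 ≤ α * L := mul_nonneg hαpos.le hLpos
        have step1 : (α * z) * (α * L) ≤ ((z + 1) ^ α - 1) * (α * L) :=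
          mul_le_mul_of_nonneg_right hA hαL
        have m1 : (α * z) * z ≤ (α * z) * (L * (z + 1)) :=
          mul_le_mul_of_nonneg_left h2 (by positivity)
        have hzL : 0 ≤ α * (z * L) := by positivity
        have m2 : (α * z) * (L * (z + 1)) ≤ 2 * ((α * z) * L) := by nlinarith [hzL]
        nlinarith [step1, m1, m2,
          mul_nonneg (mul_nonneg (sub_nonneg.2 hα1.le) hαpos.le) (mul_nonneg hz0.le hLpos)]
    refine le_trans ?_ (le_max_right _ _)
    have key : ξ * z ≤ ξ ^ 2 / (2 * α) + α * z ^ 2 / 2 := by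
      have h : 0 ≤ (ξ - α * z) ^ 2 / (2 * α) := by positivity
      have he : (ξ - α * z) ^ 2 / (2 * α) = ξ ^ 2 / (2 * α) + α * z ^ 2 / 2 - ξ * z := by
        field_simp; ring
      linarith
    linarith
  · -- z ≥ 1 : power bound
    have hzpos : (0:ℝ) ≤ z := by linarith
    have h1 : 1 + z ^ α ≤ (z + 1) ^ α := by
      have := aux_one_add_rpow hzpos hα1.le
      rwa [add_comm (1:ℝ) z] at this
    have hlog2 : (1:ℝ) / 2 ≤ L := by
      have h21 : Real.log 2 ≤ L := Real.log_le_log (by norm_num) (by linarith)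
      have := Real.log_two_gt_d9
      linarith
    have hzα : (0:ℝ) ≤ z ^ α := Real.rpow_nonneg hzpos _
    have hΦ : (α / 2) * z ^ α ≤ ((z + 1) ^ α - 1) * (α * L) := by
      have hA : z ^ α ≤ (z + 1) ^ α - 1 := by linarith
      have hB : α / 2 ≤ α * L := by nlinarith
      calc (α / 2) * z ^ α = z ^ α * (α / 2) := by ring
        _ ≤ ((z + 1) ^ α - 1) * (α * L) :=
          mul_le_mul hA hB (by positivity) (by linarith)
    refine le_trans ?_ (le_max_left _ _)
    have := aux_young α ξ z hα1 hzpos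
    linarith
end

section
/- For p = 1/2 and α ≥ 1, the function Φ_{1/2,α}(z) := 2α · (z/(z+1)) · ((z+1)^{2α} - 1) satisfies Φ_{1/2,α}(z) ≥ 2α z² for all z > -1. -/
theorem Phi_half_alpha_lower (α z : ℝ) (hα : 1 ≤ α) (hz : -1 < z) :
    2 * α * (z / (z + 1)) * ((z + 1) ^ (2 * α) - 1) ≥ 2 * α * z ^ 2 := by
  have hx : 0 < z + 1 := by linarith
  have hsq : (z + 1) ^ (2 : ℝ) = (z + 1) ^ 2 := by
    rw [show (2:ℝ) = ((2:ℕ):ℝ) by norm_num, Real.rpow_natCast]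
  have h1 : 0 ≤ z * ((z + 1) ^ (2 * α) - (z + 1) ^ 2) := by
    rcases le_or_gt 0 z with hz0 | hz0
    · have h2 : (z + 1) ^ (2 : ℝ) ≤ (z + 1) ^ (2 * α) :=
        Real.rpow_le_rpow_of_exponent_le (by linarith) (by nlinarith)
      rw [hsq] at h2
      exact mul_nonneg hz0 (by linarith)
    · have h2 : (z + 1) ^ (2 * α) ≤ (z + 1) ^ (2 : ℝ) :=
        Real.rpow_le_rpow_of_exponent_ge hx (by linarith) (by nlinarith)
      rw [hsq] at h2
      nlinarith
  have key : 2 * α * (z / (z + 1)) * ((z + 1) ^ (2 * α) - 1)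
      = (2 * α * (z * ((z + 1) ^ (2 * α) - 1))) / (z + 1) := by ring
  rw [ge_iff_le, key, le_div_iff₀ hx]
  nlinarith [mul_nonneg (by linarith : (0:ℝ) ≤ α) h1, sq_nonneg z,
    mul_nonneg (by linarith : (0:ℝ) ≤ α) (sq_nonneg z)]
end

section
/- For p > 0 and α = p+1, the function G_λ(w) := (w² - w^{1-λ} - w^{1+λ} + 1)/(1 - λ²) with λ = 1/p satisfies G_λ''(w) ≥ 2 for all w > 0, and consequently G_λ(w) ≥ (w-1)² for all w > 0. -/
open Real Set

lemma hasDerivAt_G (l c w : ℝ) (hw : 0 < w) :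
    HasDerivAt (fun x : ℝ => (x ^ 2 - x ^ (1 - l) - x ^ (1 + l) + 1) / c)
      ((2 * w - (1 - l) * w ^ (-l) - (1 + l) * w ^ l) / c) w := by
  have h1 := Real.hasDerivAt_rpow_const (x := w) (p := 1 - l) (Or.inl hw.ne')
  have h2 := Real.hasDerivAt_rpow_const (x := w) (p := 1 + l) (Or.inl hw.ne')
  have h0 := hasDerivAt_pow 2 w
  have := (((h0.sub h1).sub h2).add_const (1 : ℝ)).div_const c
  convert this using 2
  · rfl
  · rfl
  · rfl
  rw [show (1:ℝ) - l - 1 = -l by ring, show (1:ℝ) + l - 1 = l by ring]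
  push_cast
  ring

lemma hasDerivAt_G' (l c w : ℝ) (hw : 0 < w) :
    HasDerivAt (fun x : ℝ => (2 * x - (1 - l) * x ^ (-l) - (1 + l) * x ^ l) / c)
      ((2 + l * (1 - l) * w ^ (-l - 1) - l * (1 + l) * w ^ (l - 1)) / c) w := by
  have h1 := (Real.hasDerivAt_rpow_const (x := w) (p := -l) (Or.inl hw.ne')).const_mul (1 - l)
  have h2 := (Real.hasDerivAt_rpow_const (x := w) (p := l) (Or.inl hw.ne')).const_mul (1 + l)
  have h0 := (hasDerivAt_id w).const_mul (2 : ℝ)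
  have := ((h0.sub h1).sub h2).div_const c
  convert this using 2
  · rfl
  · rfl
  · rfl
  ring

lemma keyA (l w : ℝ) (hl : 0 < l) (hl1 : l ≠ 1) (hw : 0 < w) :
    0 ≤ (2 * l * w ^ (l + 1) + (1 - l) - (1 + l) * w ^ (2 * l)) / (1 - l ^ 2) := by
  rcases lt_or_gt_of_ne hl1 with h | h
  · apply div_nonneg _ (by nlinarith)
    have amgm := Real.geom_mean_le_arith_mean2_weighted
      (w₁ := 2 * l / (1 + l)) (w₂ := (1 - l) / (1 + l)) (p₁ := w ^ (l + 1)) (p₂ := 1)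
      (by positivity) (div_nonneg (by linarith) (by positivity)) (by positivity) zero_le_one
      (by field_simp; ring)
    rw [Real.one_rpow, mul_one, ← Real.rpow_mul hw.le,
      show (l + 1) * (2 * l / (1 + l)) = 2 * l by field_simp; ring] at amgm
    have h1l : (0:ℝ) < 1 + l := by linarith
    simp only [mul_one] at amgm
    rw [div_mul_eq_mul_div, ← add_div, le_div_iff₀ h1l] at amgm
    nlinarith [amgm]
  · rw [div_nonneg_iff]
    right
    constructor
    · have amgm := Real.geom_mean_le_arith_mean2_weighted
        (w₁ := (1 + l) / (2 * l)) (w₂ := (l - 1) / (2 * l)) (p₁ := w ^ (2 * l)) (p₂ := 1)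
        (by positivity) (div_nonneg (by linarith) (by positivity)) (by positivity) zero_le_one
        (by field_simp; ring)
      rw [Real.one_rpow, mul_one, ← Real.rpow_mul hw.le,
        show (2 * l) * ((1 + l) / (2 * l)) = l + 1 by field_simp; ring] at amgm
      have h2l : (0:ℝ) < 2 * l := by linarith
      simp only [mul_one] at amgm
      rw [div_mul_eq_mul_div, ← add_div, le_div_iff₀ h2l] at amgm
      nlinarith [amgm]
    · nlinarith

lemma G''_ge_two (l w : ℝ) (hl : 0 < l) (hl1 : l ≠ 1) (hw : 0 < w) :
    2 ≤ (2 + l * (1 - l) * w ^ (-l - 1) - l * (1 + l) * w ^ (l - 1)) / (1 - l ^ 2) := by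
  have hc : (1 : ℝ) - l ^ 2 ≠ 0 := by
    intro h
    rcases lt_or_gt_of_ne hl1 with h' | h' <;> nlinarith
  have hXY : w ^ (-l - 1) * w ^ (l + 1) = 1 := by
    rw [← Real.rpow_add hw, show -l - 1 + (l + 1) = 0 by ring, Real.rpow_zero]
  have hXZ : w ^ (-l - 1) * w ^ (2 * l) = w ^ (l - 1) := by
    rw [← Real.rpow_add hw]; ring_nf
  have hA := keyA l w hl hl1 hw
  have hX : 0 ≤ l * w ^ (-l - 1) := mul_nonneg hl.le (Real.rpow_nonneg hw.le _)
  have hnum : 2 + l * (1 - l) * w ^ (-l - 1) - l * (1 + l) * w ^ (l - 1)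
      = 2 * (1 - l ^ 2) + (l * w ^ (-l - 1)) *
        (2 * l * w ^ (l + 1) + (1 - l) - (1 + l) * w ^ (2 * l)) := by
    linear_combination (l * (1 + l)) * hXZ - 2 * l ^ 2 * hXY
  have hid : (2 + l * (1 - l) * w ^ (-l - 1) - l * (1 + l) * w ^ (l - 1)) / (1 - l ^ 2)
      = 2 + (l * w ^ (-l - 1)) *
        ((2 * l * w ^ (l + 1) + (1 - l) - (1 + l) * w ^ (2 * l)) / (1 - l ^ 2)) := by
    rw [hnum]
    field_simp
  rw [hid]
  nlinarith [mul_nonneg hX hA]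

theorem G_lambda_bounds (p : ℝ) (hp : 0 < p) (hp1 : p ≠ 1) :
    ∀ w : ℝ, 0 < w →
      2 ≤ deriv (deriv (fun w : ℝ =>
            (w ^ 2 - w ^ (1 - 1/p) - w ^ (1 + 1/p) + 1) / (1 - (1/p) ^ 2))) w ∧
      (w ^ 2 - w ^ (1 - 1/p) - w ^ (1 + 1/p) + 1) / (1 - (1/p) ^ 2) ≥ (w - 1) ^ 2 := by
  intro w hw
  set l : ℝ := 1 / p with hldef
  have hl : 0 < l := by positivity
  have hl1 : l ≠ 1 := by
    intro h
    apply hp1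
    rw [hldef] at h
    field_simp at h
    linarith
  have hc : (1 : ℝ) - l ^ 2 ≠ 0 := by
    intro h
    rcases lt_or_gt_of_ne hl1 with h' | h' <;> nlinarith
  set c : ℝ := 1 - l ^ 2 with hcdef
  -- the derivative of G equals G' on a neighborhood of any positive point
  have hdg : ∀ x : ℝ, 0 < x →
      deriv (fun x : ℝ => (x ^ 2 - x ^ (1 - l) - x ^ (1 + l) + 1) / c) x
        = (2 * x - (1 - l) * x ^ (-l) - (1 + l) * x ^ l) / c :=
    fun x hx => (hasDerivAt_G l c x hx).deriv
  constructor
  · -- second derivative bound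
    have hev : deriv (fun x : ℝ => (x ^ 2 - x ^ (1 - l) - x ^ (1 + l) + 1) / c)
        =ᶠ[nhds w] (fun x : ℝ => (2 * x - (1 - l) * x ^ (-l) - (1 + l) * x ^ l) / c) := by
      filter_upwards [isOpen_Ioi.mem_nhds (show w ∈ Ioi 0 from hw)] with x hx
      exact hdg x hx
    rw [hev.deriv_eq, (hasDerivAt_G' l c w hw).deriv]
    exact G''_ge_two l w hl hl1 hw
  · -- G ≥ (w-1)^2
    set F : ℝ → ℝ := fun x => (x ^ 2 - x ^ (1 - l) - x ^ (1 + l) + 1) / c - (x - 1) ^ 2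
      with hFdef
    set F' : ℝ → ℝ := fun x => (2 * x - (1 - l) * x ^ (-l) - (1 + l) * x ^ l) / c - 2 * (x - 1)
      with hF'def
    have hF : ∀ x : ℝ, 0 < x → HasDerivAt F (F' x) x := by
      intro x hx
      have h2 : HasDerivAt (fun y : ℝ => (y - 1) ^ 2) (2 * (x - 1)) x := by
        have := ((hasDerivAt_id x).sub_const 1).pow 2
        convert this using 1
        · rfl
        · rfl
        · rfl
        simp [id]
      exact (hasDerivAt_G l c x hx).sub h2
    have hF' : ∀ x : ℝ, 0 < x →
        HasDerivAt F' ((2 + l * (1 - l) * x ^ (-l - 1) - l * (1 + l) * x ^ (l - 1)) / c - 2) x :=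
      fun x hx => (hasDerivAt_G' l c x hx).sub
        (by simpa using ((hasDerivAt_id x).sub_const 1).const_mul 2)
    -- F' is monotone on Ioi 0
    have hmono : MonotoneOn F' (Ioi 0) := by
      apply monotoneOn_of_deriv_nonneg (convex_Ioi 0)
      · exact fun x hx => ((hF' x hx).continuousAt).continuousWithinAt
      · intro x hx
        rw [interior_Ioi] at hx
        exact ((hF' x hx).differentiableAt).differentiableWithinAt
      · intro x hx
        rw [interior_Ioi] at hx
        rw [(hF' x hx).deriv]
        have := G''_ge_two l x hl hl1 hx
        linarith
    have hF'1 : F' 1 = 0 := by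
      simp only [hF'def, Real.one_rpow]
      field_simp
      ring
    have hF1 : F 1 = 0 := by
      simp only [hFdef, Real.one_rpow]
      norm_num
    rcases le_total w 1 with hw1 | hw1
    · -- antitone on Ioc 0 1
      have hanti : AntitoneOn F (Ioc 0 1) := by
        apply antitoneOn_of_deriv_nonpos (convex_Ioc 0 1)
        · exact fun x hx => ((hF x hx.1).continuousAt).continuousWithinAt
        · intro x hx
          rw [interior_Ioc] at hx
          exact ((hF x hx.1).differentiableAt).differentiableWithinAt
        · intro x hx
          rw [interior_Ioc] at hx
          rw [(hF x hx.1).deriv]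
          have h1 := hmono (show x ∈ Ioi 0 from hx.1) (show (1:ℝ) ∈ Ioi 0 by norm_num)
            hx.2.le
          rw [hF'1] at h1
          exact h1
      have := hanti (show w ∈ Ioc 0 1 from ⟨hw, hw1⟩) (show (1:ℝ) ∈ Ioc 0 1 by norm_num) hw1
      rw [hF1] at this
      simp only [hFdef] at this
      linarith
    · -- monotone on Ici 1
      have hmonoF : MonotoneOn F (Ici 1) := by
        apply monotoneOn_of_deriv_nonneg (convex_Ici 1)
        · exact fun x hx => ((hF x (lt_of_lt_of_le one_pos hx)).continuousAt).continuousWithinAt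
        · intro x hx
          rw [interior_Ici] at hx
          exact ((hF x (lt_trans one_pos hx)).differentiableAt).differentiableWithinAt
        · intro x hx
          rw [interior_Ici] at hx
          rw [(hF x (lt_trans one_pos hx)).deriv]
          have h1 := hmono (show (1:ℝ) ∈ Ioi 0 by norm_num)
            (show x ∈ Ioi 0 from mem_Ioi.mpr (lt_trans one_pos hx)) (le_of_lt hx)
          rw [hF'1] at h1
          linarith
      have := hmonoF (mem_Ici.mpr (le_refl 1)) (show w ∈ Ici 1 from hw1) hw1
      rw [hF1] at this
      simp only [hFdef] at this
      linarith
end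

section
/- For α ∈ [1,2] and ρ ≥ 0, the inequality ρ^{2-α}/(2α) ≤ λ_B(ρ) + 1 holds, where λ_B(ρ) = ρ log ρ - ρ + 1 (with λ_B(0) = 1). -/
theorem rpow_le_boltzmann (α ρ : ℝ) (hα1 : 1 ≤ α) (hα2 : α ≤ 2) (hρ : 0 ≤ ρ) :
    ρ ^ (2 - α) / (2 * α) ≤ (ρ * Real.log ρ - ρ + 1) + 1 := by
  have hα0 : (0:ℝ) < 2 * α := by linarith
  rcases eq_or_lt_of_le hρ with h0 | hρ'
  · subst h0
    simp only [Real.log_zero, mul_zero, zero_mul, sub_zero, zero_sub]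
    rcases eq_or_lt_of_le hα2 with h2 | h2
    · subst h2
      norm_num
    · rw [Real.zero_rpow (by linarith : (2:ℝ) - α ≠ 0)]
      rw [zero_div]
      norm_num
  · -- tangent bounds for ρ log ρ
    have h1 : ρ - 1 ≤ ρ * Real.log ρ := by
      have := Real.log_le_sub_one_of_pos (show 0 < 1/ρ by positivity)
      rw [Real.log_div one_ne_zero (ne_of_gt hρ'), Real.log_one] at this
      have h' : -Real.log ρ ≤ 1/ρ - 1 := by simpa using this
      have := mul_le_mul_of_nonneg_left h' hρ
      rw [mul_sub, mul_one_div, div_self (ne_of_gt hρ')] at this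
      nlinarith
    have hc2 : Real.exp (1/2) ≤ 2 := by
      nlinarith [Real.exp_one_lt_d9, Real.exp_pos (1/2 : ℝ),
        (by rw [← Real.exp_add]; norm_num :
          Real.exp (1/2) * Real.exp (1/2) = Real.exp 1)]
    have h2 : (3/2) * ρ - 2 ≤ ρ * Real.log ρ := by
      have := Real.log_le_sub_one_of_pos (show 0 < Real.exp (1/2) / ρ by positivity)
      rw [Real.log_div (ne_of_gt (Real.exp_pos _)) (ne_of_gt hρ'), Real.log_exp] at this
      have h' := mul_le_mul_of_nonneg_left this hρ
      have heq : ρ * (Real.exp (1/2) / ρ - 1) = Real.exp (1/2) - ρ := by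
        field_simp
      nlinarith [h', heq, hc2]
    have hg : ρ ^ (2 - α) ≤ (2 - α) * ρ + (α - 1) * 1 := by
      have := Real.geom_mean_le_arith_mean2_weighted
        (by linarith : (0:ℝ) ≤ 2 - α) (by linarith : (0:ℝ) ≤ α - 1)
        hρ (zero_le_one) (by ring)
      simpa using this
    rw [div_le_iff₀ hα0]
    nlinarith [mul_nonneg (by linarith : (0:ℝ) ≤ α - 1) hρ,
      mul_nonneg (by linarith : (0:ℝ) ≤ 2 - α) hρ,
      mul_le_mul_of_nonneg_left h1 (le_of_lt hα0),
      mul_le_mul_of_nonneg_left h2 (le_of_lt hα0)]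
end
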